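/- With V = V₋₁ ⊕ V₀ ⊕ V₁ (one-dimensional components u, v, w) and structure constants aₙ, bₙ, cₙ, Jₙ(u⊗v⊗w^{⊗(n−2)}) = Σ_{p=1}^n (−1)^{p(n−p)} b_{n−p+1} [ C(n−2, p−2)·a_p − C(n−2, p−1)·c_p ] · v. -/

import Mathlib

open Finset Equiv

/-- Sign `(-1)^z` for an integer `z`, valued in a field. -/
def ksign (K : Type*) [Field K] (z : ℤ) : K := if Even z then 1 else -1

/-- The Koszul sign `χ(σ)` of a permutation acting on a list of basis elements
with degrees given by `d`. -/
def chi (K : Type*) [Field K] (d : Fin 3 → ℤ) (xs : List (Fin 3))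
    (σ : Perm (Fin xs.length)) : K :=
  ((Perm.sign σ : ℤ) : K) *
    ∏ p ∈ Finset.univ.filter
      (fun p : Fin xs.length × Fin xs.length => p.1 < p.2 ∧ σ p.2 < σ p.1),
      ksign K (d (xs.get (σ p.1)) * d (xs.get (σ p.2)))

/-- `(p, n-p)`-unshuffles in `S_n`. -/
def unshuffles (p n : ℕ) : Finset (Perm (Fin n)) :=
  Finset.univ.filter (fun σ =>
    (∀ i j : Fin n, i < j → (j : ℕ) < p → σ i < σ j) ∧
    (∀ i j : Fin n, p ≤ (i : ℕ) → i < j → σ i < σ j))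

/-- The Koszul sign picked up when sorting a list of basis elements into
canonical (increasing) order; degrees given by `d`. -/
def sortSign (K : Type*) [Field K] (d : Fin 3 → ℤ) (xs : List (Fin 3)) : K :=
  ∏ p ∈ Finset.univ.filter
    (fun p : Fin xs.length × Fin xs.length => p.1 < p.2 ∧ xs.get p.2 < xs.get p.1),
    (-(ksign K (d (xs.get p.1) * d (xs.get p.2))))

/-- The generalized Jacobi expression `Jₙ = Σ_p (-1)^{p(n-p)} l_{n-p+1} ∘ l_p`,
evaluated on a basis tensor `xs` (so `n = xs.length`), where `ell` gives the
value of each `l_m` on basis tensors (as a coordinate vector in `Fin 3 → K`),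
extended by unshuffles with Koszul signs. -/
def Jac (K : Type*) [Field K] (d : Fin 3 → ℤ) (ell : List (Fin 3) → (Fin 3 → K))
    (xs : List (Fin 3)) : Fin 3 → K :=
  ∑ p ∈ Finset.Icc 1 xs.length, ((-1 : K) ^ (p * (xs.length - p))) •
    ∑ σ ∈ unshuffles p xs.length,
      chi K d xs σ •
        (fun j : Fin 3 => ∑ i : Fin 3,
          ell ((List.ofFn (fun t => xs.get (σ t))).take p) i *
          ell (i :: (List.ofFn (fun t => xs.get (σ t))).drop p) j)

/-- The operators on `V₀ ⊕ V₁ ⊕ V₂` (basis `v = 0, w = 1, x = 2`) determined by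
constants `a, b, c`:  `lₙ(v⊗w^{n-1}) = aₙ w`, `lₙ(w^n) = bₙ x`,
`lₙ(v⊗w^{n-2}⊗x) = cₙ x`, all other values zero, extended skew-symmetrically. -/
def ell012 {K : Type*} [Field K] (a b c : ℕ → K) (xs : List (Fin 3)) : Fin 3 → K :=
  sortSign K ![0, 1, 2] xs •
    (if xs.count 0 = 1 ∧ xs.count 2 = 0 then
        (fun j : Fin 3 => if j = 1 then a xs.length else 0)
      else if xs.count 0 = 0 ∧ xs.count 2 = 0 then
        (fun j : Fin 3 => if j = 2 then b xs.length else 0)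
      else if xs.count 0 = 1 ∧ xs.count 2 = 1 then
        (fun j : Fin 3 => if j = 2 then c xs.length else 0)
      else 0)

/-- The operators on `V₋₁ ⊕ V₀ ⊕ V₁` (basis `u = 0, v = 1, w = 2`, of degrees
`-1, 0, 1`) determined by constants `a, b, c`:  `lₙ(u⊗v⊗w^{n-2}) = aₙ u`,
`lₙ(u⊗w^{n-1}) = bₙ v`, `lₙ(v⊗w^{n-1}) = cₙ w`, all other values zero,
extended skew-symmetrically. -/
def ellm {K : Type*} [Field K] (a b c : ℕ → K) (xs : List (Fin 3)) : Fin 3 → K :=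
  sortSign K ![-1, 0, 1] xs •
    (if xs.count 0 = 1 ∧ xs.count 1 = 1 then
        (fun j : Fin 3 => if j = 0 then a xs.length else 0)
      else if xs.count 0 = 1 ∧ xs.count 1 = 0 then
        (fun j : Fin 3 => if j = 1 then b xs.length else 0)
      else if xs.count 0 = 0 ∧ xs.count 1 = 1 then
        (fun j : Fin 3 => if j = 2 then c xs.length else 0)
      else 0)


/-!
An unshuffle `σ` of shape `(p, n - p)` is determined by the set `S` of positions that it moves
into the first block, and every `p`-element set of positions arises. Since `u ⊗ v ⊗ w^{⊗(n-2)}`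
is sorted, both blocks are sorted again, so the values of `l_p` on the first block and of
`l_{n-p+1}` on the second one only depend on which of `u`, `v` lie in `S`. The composite vanishes
unless `v ∈ S`; it is `a_p b_{n-p+1} v` if also `u ∈ S`, and `c_p b_{n-p+1} v` with Koszul sign
`-1` if `u ∉ S`. As `u` and `w` are odd, the permutation sign cancels their contribution to the
Koszul sign, which is therefore `(-1)` to the number of inversions of `σ` involving `v`: none in
the first case, and only the pair `(v, u)` in the second. Counting the `p`-sets that contain
`u` and `v`, resp. `v` but not `u`, gives the binomial coefficients.
-/

namespace Equiv.Perm

variable {n : ℕ}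

def inversions (σ : Perm (Fin n)) : Finset (Fin n × Fin n) :=
  univ.filter fun x => x.1 < x.2 ∧ σ x.2 < σ x.1

theorem sign_eq_neg_one_pow_card_inversions (σ : Perm (Fin n)) :
    sign σ = (-1) ^ #σ.inversions := by
  rw [sign_eq_prod_prod_Iio, inversions, ← prod_const, prod_filter, ← univ_product_univ,
    prod_product_right]
  refine prod_congr rfl fun j _ => ?_
  rw [← filter_gt_eq_Iio, prod_filter]
  refine prod_congr rfl fun i _ => ?_
  by_cases hij : i < j
  · rcases (σ.injective.ne hij.ne).lt_or_gt with h | h <;> simp [hij, h, h.not_gt]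
  · simp [hij]

end Equiv.Perm

open Equiv.Perm

section KoszulSign

variable {K : Type*} [Field K]

theorem neg_ksign_degree_mul (x y : Fin 3) :
    -ksign K (![-1, 0, 1] x * ![-1, 0, 1] y) = if x = 1 ∨ y = 1 then -1 else 1 := by
  fin_cases x <;> fin_cases y <;> norm_num [ksign]

theorem chi_eq_neg_one_pow {xs : List (Fin 3)} (σ : Perm (Fin xs.length)) :
    chi K ![-1, 0, 1] xs σ =
      (-1) ^ #(σ.inversions.filter fun x => xs.get (σ x.1) = 1 ∨ xs.get (σ x.2) = 1) := by
  rw [chi, sign_eq_neg_one_pow_card_inversions, ← inversions]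
  push_cast
  rw [← prod_const, ← prod_mul_distrib, ← prod_const, prod_filter]
  refine prod_congr rfl fun x _ => ?_
  rw [neg_one_mul, neg_ksign_degree_mul]

theorem sortSign_eq_one_of_pairwise {d : Fin 3 → ℤ} {xs : List (Fin 3)}
    (h : xs.Pairwise (· ≤ ·)) : sortSign K d xs = 1 := by
  rw [sortSign, filter_false_of_mem, prod_empty]
  rintro ⟨i, j⟩ - ⟨hij, hji⟩
  exact (List.pairwise_iff_get.mp h i j hij).not_gt hji

theorem sortSign_eq_one_of_count_one_eq_zero {xs : List (Fin 3)} (h : xs.count 1 = 0) :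
    sortSign K ![-1, 0, 1] xs = 1 := by
  refine prod_eq_one fun x _ => ?_
  have hne : ∀ i, xs.get i ≠ 1 := fun i hi => List.count_eq_zero.mp h (hi ▸ List.get_mem xs i)
  rw [neg_ksign_degree_mul, if_neg (not_or.mpr ⟨hne _, hne _⟩)]

end KoszulSign

section ellm

variable {K : Type*} [Field K] (a b c : ℕ → K) {xs : List (Fin 3)}

theorem ellm_eq_single_zero (h0 : xs.count 0 = 1) (h1 : xs.count 1 = 1)
    (hs : xs.Pairwise (· ≤ ·)) : ellm a b c xs = Pi.single 0 (a xs.length) := by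
  ext j
  simp [ellm, sortSign_eq_one_of_pairwise hs, h0, h1, Pi.single_apply]

theorem ellm_eq_single_one (h0 : xs.count 0 = 1) (h1 : xs.count 1 = 0) :
    ellm a b c xs = Pi.single 1 (b xs.length) := by
  ext j
  simp [ellm, sortSign_eq_one_of_count_one_eq_zero h1, h0, h1, Pi.single_apply]

theorem ellm_eq_single_two (h0 : xs.count 0 = 0) (h1 : xs.count 1 = 1)
    (hs : xs.Pairwise (· ≤ ·)) : ellm a b c xs = Pi.single 2 (c xs.length) := by
  ext j
  simp [ellm, sortSign_eq_one_of_pairwise hs, h0, h1, Pi.single_apply]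

theorem ellm_eq_zero_of_count_eq_zero (h0 : xs.count 0 = 0) (h1 : xs.count 1 = 0) :
    ellm a b c xs = 0 := by
  simp [ellm, h0, h1]

theorem ellm_eq_zero_of_two_le_count_one (h1 : 2 ≤ xs.count 1) : ellm a b c xs = 0 := by
  simp [ellm, show xs.count 1 ≠ 0 by omega, show xs.count 1 ≠ 1 by omega]

end ellm

section unshuffles

variable {n p : ℕ}

theorem mem_unshuffles {σ : Perm (Fin n)} : σ ∈ unshuffles p n ↔
    (∀ i j : Fin n, i < j → (j : ℕ) < p → σ i < σ j) ∧
    (∀ i j : Fin n, p ≤ (i : ℕ) → i < j → σ i < σ j) := by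
  simp [unshuffles]

theorem lt_le_of_mem_inversions {σ : Perm (Fin n)} (hσ : σ ∈ unshuffles p n)
    {x : Fin n × Fin n} (hx : x ∈ σ.inversions) : (x.1 : ℕ) < p ∧ p ≤ (x.2 : ℕ) := by
  simp only [inversions, mem_filter, mem_univ, true_and] at hx
  obtain ⟨hleft, hright⟩ := mem_unshuffles.mp hσ
  by_contra h
  rcases not_and_or.mp h with h | h
  · exact (hright _ _ (not_lt.mp h) hx.1).not_gt hx.2
  · exact (hleft _ _ hx.1 (not_le.mp h)).not_gt hx.2

def leftBlock (p : ℕ) (σ : Perm (Fin n)) : Finset (Fin n) :=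
  univ.filter fun y => (σ.symm y : ℕ) < p

theorem mem_leftBlock {σ : Perm (Fin n)} {y : Fin n} :
    y ∈ leftBlock p σ ↔ (σ.symm y : ℕ) < p := by
  simp [leftBlock]

theorem leftBlock_eq_map (σ : Perm (Fin n)) (hp : p ≤ n) :
    leftBlock p σ = univ.map ((Fin.castLEEmb hp).trans σ.toEmbedding) := by
  ext y
  simp only [mem_leftBlock, mem_map, mem_univ, true_and, Function.Embedding.trans_apply,
    Fin.castLEEmb_apply, Equiv.toEmbedding_apply]
  constructor
  · intro hy
    exact ⟨⟨σ.symm y, hy⟩, by simp [Fin.castLE]⟩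
  · rintro ⟨t, rfl⟩
    simp

theorem card_leftBlock (σ : Perm (Fin n)) (hp : p ≤ n) : #(leftBlock p σ) = p := by
  rw [leftBlock_eq_map σ hp, card_map, card_univ, Fintype.card_fin]

theorem eq_of_leftBlock_eq {σ τ : Perm (Fin n)} (hσ : σ ∈ unshuffles p n)
    (hτ : τ ∈ unshuffles p n) (h : leftBlock p σ = leftBlock p τ) : σ = τ := by
  obtain ⟨hσl, hσr⟩ := mem_unshuffles.mp hσ
  obtain ⟨hτl, hτr⟩ := mem_unshuffles.mp hτ
  have hrange (π : Perm (Fin n)) (P : ℕ → Prop) :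
      Set.range (fun t : {t : Fin n // P t} => π t.1) = {y | P (π.symm y)} := by
    ext y
    exact ⟨by rintro ⟨⟨t, ht⟩, rfl⟩; simpa using ht, fun hy => ⟨⟨_, hy⟩, by simp⟩⟩
  have hsymm (y : Fin n) : (σ.symm y : ℕ) < p ↔ (τ.symm y : ℕ) < p := by
    rw [← mem_leftBlock, h, mem_leftBlock]
  -- On each block both permutations are strictly monotone with the same range.
  have hleft : (fun t : {t : Fin n // (t : ℕ) < p} => σ t.1) = fun t => τ t.1 := by
    have hσm : StrictMono fun t : {t : Fin n // (t : ℕ) < p} => σ t.1 :=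
      fun i j hij => hσl _ _ hij j.2
    have hτm : StrictMono fun t : {t : Fin n // (t : ℕ) < p} => τ t.1 :=
      fun i j hij => hτl _ _ hij j.2
    rw [← hσm.range_inj hτm, hrange σ (· < p), hrange τ (· < p)]
    exact Set.ext hsymm
  have hright : (fun t : {t : Fin n // p ≤ (t : ℕ)} => σ t.1) = fun t => τ t.1 := by
    have hσm : StrictMono fun t : {t : Fin n // p ≤ (t : ℕ)} => σ t.1 :=
      fun i j hij => hσr _ _ i.2 hij
    have hτm : StrictMono fun t : {t : Fin n // p ≤ (t : ℕ)} => τ t.1 :=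
      fun i j hij => hτr _ _ i.2 hij
    rw [← hσm.range_inj hτm, hrange σ (p ≤ ·), hrange τ (p ≤ ·)]
    exact Set.ext fun y => not_lt.symm.trans ((hsymm y).not.trans not_lt)
  ext1 t
  by_cases ht : (t : ℕ) < p
  · exact congrFun hleft ⟨t, ht⟩
  · exact congrFun hright ⟨t, not_lt.mp ht⟩

end unshuffles

section unshuffleOfFinset

variable {n p : ℕ} {S : Finset (Fin n)} (hS : #S = p)

include hS in
theorem card_compl_of_card_eq : #Sᶜ = n - p := by
  rw [card_compl, hS, Fintype.card_fin]

include hS in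
theorem add_sub_of_card_eq : p + (n - p) = n := by
  have := hS ▸ card_le_univ S
  rw [Fintype.card_fin] at this
  omega

def unshuffleOfFinset : Perm (Fin n) :=
  (finCongr (add_sub_of_card_eq hS).symm).trans
    (finSumFinEquiv.symm.trans (finSumEquivOfFinset hS (card_compl_of_card_eq hS)))

theorem unshuffleOfFinset_apply_of_lt {t : Fin n} (ht : (t : ℕ) < p) :
    unshuffleOfFinset hS t = S.orderEmbOfFin hS ⟨t, ht⟩ := by
  have : finCongr (add_sub_of_card_eq hS).symm t = Fin.castAdd (n - p) ⟨t, ht⟩ := rfl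
  rw [unshuffleOfFinset, trans_apply, trans_apply, this, finSumFinEquiv_symm_apply_castAdd,
    finSumEquivOfFinset_inl]

theorem unshuffleOfFinset_apply_of_le {t : Fin n} (ht : p ≤ (t : ℕ)) :
    unshuffleOfFinset hS t =
      Sᶜ.orderEmbOfFin (card_compl_of_card_eq hS) ⟨t - p, by omega⟩ := by
  have : finCongr (add_sub_of_card_eq hS).symm t = Fin.natAdd p ⟨t - p, by omega⟩ :=
    Fin.ext (by simp; omega)
  rw [unshuffleOfFinset, trans_apply, trans_apply, this, finSumFinEquiv_symm_apply_natAdd,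
    finSumEquivOfFinset_inr]

theorem unshuffleOfFinset_mem : unshuffleOfFinset hS ∈ unshuffles p n := by
  refine mem_unshuffles.mpr ⟨fun i j hij hj => ?_, fun i j hi hij => ?_⟩
  · rw [unshuffleOfFinset_apply_of_lt hS hj,
      unshuffleOfFinset_apply_of_lt hS ((Fin.lt_def.mp hij).trans hj)]
    exact (S.orderEmbOfFin hS).strictMono hij
  · rw [unshuffleOfFinset_apply_of_le hS hi, unshuffleOfFinset_apply_of_le hS (hi.trans hij.le)]
    exact (Sᶜ.orderEmbOfFin _).strictMono (Fin.mk_lt_mk.mpr (by omega))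

theorem leftBlock_unshuffleOfFinset : leftBlock p (unshuffleOfFinset hS) = S := by
  ext y
  obtain ⟨t, rfl⟩ := (unshuffleOfFinset hS).surjective y
  rw [mem_leftBlock, symm_apply_apply]
  by_cases ht : (t : ℕ) < p
  · simp [ht, unshuffleOfFinset_apply_of_lt hS ht]
  · have := Finset.orderEmbOfFin_mem Sᶜ (card_compl_of_card_eq hS) ⟨t - p, by omega⟩
    rw [mem_compl] at this
    simp [ht, unshuffleOfFinset_apply_of_le hS (not_lt.mp ht), this]

end unshuffleOfFinset

theorem sum_unshuffles_eq_sum_powersetCard {M : Type*} [AddCommMonoid M] {n p : ℕ} (hp : p ≤ n)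
    (f : Finset (Fin n) → M) :
    ∑ σ ∈ unshuffles p n, f (leftBlock p σ) = ∑ S ∈ powersetCard p univ, f S :=
  sum_nbij (leftBlock p) (fun σ _ => mem_powersetCard.mpr ⟨subset_univ _, card_leftBlock σ hp⟩)
    (fun _ hσ _ hτ h => eq_of_leftBlock_eq hσ hτ h)
    (fun _ hS => ⟨unshuffleOfFinset (mem_powersetCard.mp hS).2, unshuffleOfFinset_mem _,
      leftBlock_unshuffleOfFinset _⟩)
    (fun _ _ => rfl)

theorem List.count_ofFn_eq_card {α : Type*} [DecidableEq α] {k : ℕ} (g : Fin k → α) (y : α) :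
    (List.ofFn g).count y = #{t | g t = y} := by
  rw [← Multiset.coe_count, ← Fin.univ_val_map, Multiset.count_map]
  simp_rw [eq_comm (a := y)]
  rfl

section blocks

variable {p : ℕ} {xs : List (Fin 3)}

theorem count_take_ofFn_get (σ : Perm (Fin xs.length)) (hp : p ≤ xs.length) (y : Fin 3) :
    ((List.ofFn fun t => xs.get (σ t)).take p).count y =
      #{w ∈ leftBlock p σ | xs.get w = y} := by
  rw [← Fin.ofFn_take_eq_take_ofFn hp, List.count_ofFn_eq_card, leftBlock_eq_map σ hp,
    filter_map, card_map]
  rfl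

theorem count_take_add_count_drop_ofFn_get (σ : Perm (Fin xs.length)) (y : Fin 3) :
    ((List.ofFn fun t => xs.get (σ t)).take p).count y +
      ((List.ofFn fun t => xs.get (σ t)).drop p).count y = xs.count y := by
  rw [← List.count_append, List.take_append_drop]
  exact ((σ.ofFn_comp_perm xs.get).count_eq y).trans (by rw [List.ofFn_get])

theorem pairwise_take_ofFn_get (hxs : xs.Pairwise (· ≤ ·)) {σ : Perm (Fin xs.length)}
    (hσ : σ ∈ unshuffles p xs.length) (hp : p ≤ xs.length) :
    ((List.ofFn fun t => xs.get (σ t)).take p).Pairwise (· ≤ ·) := by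
  rw [← Fin.ofFn_take_eq_take_ofFn hp, List.pairwise_ofFn]
  intro i j hij
  exact List.pairwise_iff_get.mp hxs _ _ ((mem_unshuffles.mp hσ).1 _ _ hij j.2)

variable {y : Fin 3} {z : Fin xs.length}

theorem count_take_ofFn_get_of_unique (hz : ∀ w, xs.get w = y ↔ w = z)
    (σ : Perm (Fin xs.length)) (hp : p ≤ xs.length) :
    ((List.ofFn fun t => xs.get (σ t)).take p).count y =
      if z ∈ leftBlock p σ then 1 else 0 := by
  rw [count_take_ofFn_get σ hp, filter_congr fun w _ => hz w, filter_eq', apply_ite card,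
    card_singleton, card_empty]

theorem count_drop_ofFn_get_of_unique (hz : ∀ w, xs.get w = y ↔ w = z)
    (σ : Perm (Fin xs.length)) (hp : p ≤ xs.length) :
    ((List.ofFn fun t => xs.get (σ t)).drop p).count y =
      if z ∈ leftBlock p σ then 0 else 1 := by
  have hcount : xs.count y = 1 := by
    rw [← List.ofFn_get xs, List.count_ofFn_eq_card, filter_congr fun w _ => hz w,
      filter_eq' univ, if_pos (mem_univ z), card_singleton]
  have := count_take_add_count_drop_ofFn_get (p := p) σ y
  rw [count_take_ofFn_get_of_unique hz σ hp, hcount] at this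
  split_ifs at this ⊢ <;> omega

end blocks

section counting

variable {α : Type*} [Fintype α] [DecidableEq α] {u v : α} {p : ℕ}

theorem card_filter_powersetCard_mem_mem (huv : u ≠ v) (hp : 2 ≤ p) :
    #{S ∈ powersetCard p univ | u ∈ S ∧ v ∈ S} = (Fintype.card α - 2).choose (p - 2) := by
  have := card_filter_powersetCard_subset {u, v} univ p (subset_univ _)
    (by rw [card_pair huv]; exact hp)
  rwa [card_pair huv, card_univ, filter_congr fun S _ => insert_subset_iff.trans
    (and_congr_right' singleton_subset_iff)] at this

theorem card_filter_powersetCard_not_mem_mem (huv : u ≠ v) (hp : 1 ≤ p) :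
    #{S ∈ powersetCard p univ | u ∉ S ∧ v ∈ S} = (Fintype.card α - 2).choose (p - 1) := by
  have := card_filter_powersetCard_subset {v} (univ.erase u) p
    (by simpa using huv.symm) (by simpa using hp)
  have hfilter : {S ∈ powersetCard p (univ : Finset α) | u ∉ S ∧ v ∈ S} =
      {S ∈ powersetCard p (univ.erase u) | ({v} : Finset α) ⊆ S} := by
    ext S
    simp [subset_erase]
    tauto
  rwa [← hfilter, card_singleton, card_erase_of_mem (mem_univ u), card_univ,
    Nat.sub_sub] at this

end counting

def uvw (m : ℕ) : List (Fin 3) := 0 :: 1 :: List.replicate m 2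

namespace uvw

@[simp]
theorem length_eq (m : ℕ) : (uvw m).length = m + 2 := by
  simp [uvw]

def posU (m : ℕ) : Fin (uvw m).length := ⟨0, by simp⟩

def posV (m : ℕ) : Fin (uvw m).length := ⟨1, by simp⟩

variable {K : Type*} [Field K] {m p : ℕ}

theorem posU_ne_posV : posU m ≠ posV m := by
  simp [posU, posV, Fin.ext_iff]

theorem get_eq_zero_iff (w : Fin (uvw m).length) : (uvw m).get w = 0 ↔ w = posU m := by
  obtain ⟨_ | _ | k, hk⟩ := w <;> simp [uvw, posU, List.getElem_replicate, Fin.ext_iff]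

theorem get_eq_one_iff (w : Fin (uvw m).length) : (uvw m).get w = 1 ↔ w = posV m := by
  obtain ⟨_ | _ | k, hk⟩ := w <;> simp [uvw, posV, List.getElem_replicate, Fin.ext_iff]

theorem pairwise_le (m : ℕ) : (uvw m).Pairwise (· ≤ ·) := by
  simp [uvw, List.pairwise_replicate, List.mem_replicate]

theorem chi_eq_of_posV_mem {σ : Perm (Fin (uvw m).length)}
    (hσ : σ ∈ unshuffles p (uvw m).length) (hV : posV m ∈ leftBlock p σ) :
    chi K ![-1, 0, 1] (uvw m) σ = if posU m ∈ leftBlock p σ then 1 else -1 := by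
  rw [mem_leftBlock] at hV
  have hinv : σ.inversions.filter (fun x => (uvw m).get (σ x.1) = 1 ∨ (uvw m).get (σ x.2) = 1) =
      ({(σ.symm (posV m), σ.symm (posU m))} : Finset _).filter
        fun _ => posU m ∉ leftBlock p σ := by
    ext x
    simp only [mem_filter, mem_singleton, get_eq_one_iff, mem_leftBlock, not_lt]
    constructor
    · rintro ⟨hx, h | h⟩
      · have hblock := lt_le_of_mem_inversions hσ hx
        simp only [inversions, mem_filter, mem_univ, true_and] at hx
        have hU : σ x.2 = posU m := by
          have := Fin.lt_def.mp (h ▸ hx.2)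
          exact Fin.ext (by simp only [posU, posV] at this ⊢; omega)
        refine ⟨Prod.ext ?_ ?_, ?_⟩
        · simp [← h]
        · simp [← hU]
        · simpa [← hU] using hblock.2
      · have := (lt_le_of_mem_inversions hσ hx).2
        rw [← h, symm_apply_apply] at hV
        omega
    · rintro ⟨rfl, hU⟩
      refine ⟨?_, Or.inl (by simp)⟩
      simp only [inversions, mem_filter, mem_univ, true_and, apply_symm_apply]
      refine ⟨Fin.lt_def.mpr (by omega), ?_⟩
      simp [Fin.lt_def, posU, posV]
  rw [chi_eq_neg_one_pow, hinv]
  split_ifs with hU <;> simp [hU]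

theorem summand_eq (a b c : ℕ → K) {σ : Perm (Fin (uvw m).length)}
    (hσ : σ ∈ unshuffles p (uvw m).length) (hp : p ≤ (uvw m).length) (j : Fin 3) :
    chi K ![-1, 0, 1] (uvw m) σ *
      ∑ i, ellm a b c ((List.ofFn fun t => (uvw m).get (σ t)).take p) i *
        ellm a b c (i :: (List.ofFn fun t => (uvw m).get (σ t)).drop p) j =
    if j = 1 then
      ((if posU m ∈ leftBlock p σ ∧ posV m ∈ leftBlock p σ then a p else 0) -
        (if posU m ∉ leftBlock p σ ∧ posV m ∈ leftBlock p σ then c p else 0)) *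
          b ((uvw m).length - p + 1)
    else 0 := by
  set L := (List.ofFn fun t => (uvw m).get (σ t)).take p
  set R := (List.ofFn fun t => (uvw m).get (σ t)).drop p
  have hL0 : L.count 0 = _ := count_take_ofFn_get_of_unique get_eq_zero_iff σ hp
  have hL1 : L.count 1 = _ := count_take_ofFn_get_of_unique get_eq_one_iff σ hp
  have hR0 : R.count 0 = _ := count_drop_ofFn_get_of_unique get_eq_zero_iff σ hp
  have hR1 : R.count 1 = _ := count_drop_ofFn_get_of_unique get_eq_one_iff σ hp
  have hL : L.length = p := by simpa [L] using hp
  have hR : R.length = (uvw m).length - p := by simp [R]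
  have hsorted : L.Pairwise (· ≤ ·) := pairwise_take_ofFn_get (pairwise_le m) hσ hp
  have hsum (k : Fin 3) (x : K) :
      ∑ i, (Pi.single k x : Fin 3 → K) i * ellm a b c (i :: R) j =
        x * ellm a b c (k :: R) j := by
    simp [Pi.single_apply]
  by_cases hU : posU m ∈ leftBlock p σ <;> by_cases hV : posV m ∈ leftBlock p σ <;>
    simp only [hU, hV, if_true, if_false] at hL0 hL1 hR0 hR1
  · rw [ellm_eq_single_zero a b c hL0 hL1 hsorted, hsum, chi_eq_of_posV_mem hσ hV, if_pos hU,
      ellm_eq_single_one a b c (xs := 0 :: R) (by simp [hR0]) (by simp [hR1])]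
    simp [Pi.single_apply, hU, hV, hL, hR]
  · rw [ellm_eq_single_one a b c hL0 hL1, hsum,
      ellm_eq_zero_of_two_le_count_one a b c (xs := 1 :: R) (by simp [hR1])]
    simp [hU, hV]
  · rw [ellm_eq_single_two a b c hL0 hL1 hsorted, hsum, chi_eq_of_posV_mem hσ hV, if_neg hU,
      ellm_eq_single_one a b c (xs := 2 :: R) (by simp [hR0]) (by simp [hR1])]
    simp [Pi.single_apply, hU, hV, hL, hR]
  · rw [ellm_eq_zero_of_count_eq_zero a b c hL0 hL1]
    simp [hU, hV]

theorem sum_unshuffles_summand (a b c : ℕ → K) (ha : a 1 = 0) (hp1 : 1 ≤ p)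
    (hp : p ≤ (uvw m).length) (j : Fin 3) :
    ∑ σ ∈ unshuffles p (uvw m).length, chi K ![-1, 0, 1] (uvw m) σ *
      ∑ i, ellm a b c ((List.ofFn fun t => (uvw m).get (σ t)).take p) i *
        ellm a b c (i :: (List.ofFn fun t => (uvw m).get (σ t)).drop p) j =
    if j = 1 then
      ((m.choose (p - 2) : K) * a p - (m.choose (p - 1) : K) * c p) * b ((uvw m).length - p + 1)
    else 0 := by
  rw [sum_congr rfl fun σ hσ => summand_eq a b c hσ hp j]
  refine (sum_unshuffles_eq_sum_powersetCard hp fun S => if j = 1 then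
    ((if posU m ∈ S ∧ posV m ∈ S then a p else 0) -
      (if posU m ∉ S ∧ posV m ∈ S then c p else 0)) * b ((uvw m).length - p + 1) else 0).trans ?_
  split_ifs with hj
  · simp only [← sum_mul, sum_sub_distrib, ← sum_filter, sum_const, nsmul_eq_mul]
    have hcard : Fintype.card (Fin (uvw m).length) - 2 = m := by simp
    rw [card_filter_powersetCard_not_mem_mem posU_ne_posV hp1, hcard]
    -- `p - 2` truncates: at `p = 1` the coefficient `m.choose (p - 2)` is `1`, not `0`.
    obtain rfl | hp2 := hp1.eq_or_lt
    · simp [ha]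
    · rw [card_filter_powersetCard_mem_mem posU_ne_posV hp2, hcard]
  · exact sum_const_zero

end uvw

theorem stmt13_general {K : Type*} [Field K] (a b c : ℕ → K) (ha : a 1 = 0)
    (n : ℕ) (hn : 2 ≤ n) :
    Jac K ![-1, 0, 1] (ellm a b c) ((0 : Fin 3) :: 1 :: List.replicate (n - 2) 2) =
      fun j : Fin 3 => if j = 1 then
        ∑ p ∈ Finset.Icc 1 n, (-1 : K) ^ (p * (n - p)) * b (n - p + 1) *
          (((n - 2).choose (p - 2) : K) * a p - ((n - 2).choose (p - 1) : K) * c p)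
      else 0 := by
  funext j
  change Jac K ![-1, 0, 1] (ellm a b c) (uvw (n - 2)) j = _
  simp only [Jac, Finset.sum_apply, Pi.smul_apply, smul_eq_mul]
  rw [sum_congr rfl fun p hp => by
    rw [uvw.sum_unshuffles_summand a b c ha (mem_Icc.mp hp).1 (mem_Icc.mp hp).2 j]]
  have hlen : (uvw (n - 2)).length = n := by simp; omega
  rw [hlen]
  split_ifs with hj
  · exact sum_congr rfl fun p _ => by ring
  · simp

/-- Explicit formula for `Jₙ(u ⊗ v ⊗ w^{⊗(n-2)})` on `V₋₁ ⊕ V₀ ⊕ V₁`. -/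
theorem stmt13 {K : Type*} [Field K] [CharZero K] (a b c : ℕ → K) (ha : a 1 = 0)
    (n : ℕ) (hn : 2 ≤ n) :
    Jac K ![-1, 0, 1] (ellm a b c) ((0 : Fin 3) :: 1 :: List.replicate (n - 2) 2) =
      fun j : Fin 3 => if j = 1 then
        ∑ p ∈ Finset.Icc 1 n, (-1 : K) ^ (p * (n - p)) * b (n - p + 1) *
          (((n - 2).choose (p - 2) : K) * a p - ((n - 2).choose (p - 1) : K) * c p)
      else 0 :=
  stmt13_general a b c ha n hn
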